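/- arXiv:2302.13252 — 5 statements merged into one kernel-verified Lean document; each statement's English description precedes it below -/
import Mathlib

section
/- If f is a ρ-gap-adjusted misspecified approximation of f₀ on a compact set X (i.e., |f(x) - f₀(x)| ≤ ρ(f* - f₀(x)) for all x, where f* = max f₀ and 0 ≤ ρ < 1), then max_{x∈X} f(x) = f*. -/
/-- If `f` is a ρ-gap-adjusted misspecified approximation of `f₀` on a
nonempty compact set `X` (i.e. `|f x - f₀ x| ≤ ρ (f* - f₀ x)` for all `x ∈ X`, where
`f*` is the maximum of `f₀` on `X` and `0 ≤ ρ < 1`), then `max_{x ∈ X} f x = f*`. -/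
theorem gam_preserves_max_value {d : ℕ} (X : Set (EuclideanSpace ℝ (Fin d)))
    (hXne : X.Nonempty) (hXcomp : IsCompact X)
    (f₀ f : EuclideanSpace ℝ (Fin d) → ℝ)
    (hf₀ : ContinuousOn f₀ X) (hf : ContinuousOn f X)
    (fstar : ℝ) (hfstar : IsGreatest (f₀ '' X) fstar)
    (ρ : ℝ) (hρ0 : 0 ≤ ρ) (hρ1 : ρ < 1)
    (hgam : ∀ x ∈ X, |f x - f₀ x| ≤ ρ * (fstar - f₀ x)) :
    IsGreatest (f '' X) fstar := by
  obtain ⟨⟨xs, hxs, hxval⟩, hub⟩ := hfstar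
  constructor
  · refine ⟨xs, hxs, ?_⟩
    have h := hgam xs hxs
    rw [hxval] at h
    have : |f xs - fstar| ≤ 0 := by nlinarith
    have := abs_nonneg (f xs - fstar)
    have : |f xs - fstar| = 0 := le_antisymm ‹_› ‹_›
    have := abs_eq_zero.mp this
    linarith
  · rintro y ⟨x, hx, rfl⟩
    have h := hgam x hx
    have h2 : f₀ x ≤ fstar := hub ⟨x, hx, rfl⟩
    have := abs_le.mp h
    nlinarith
end

section
/- If f is a ρ-gap-adjusted misspecified approximation of f₀ on a compact set X with 0 ≤ ρ < 1, then the set of maximizers of f equals the set of maximizers of f₀, i.e., argmax f = argmax f₀. -/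
/-- Under ρ-gap-adjusted misspecification with `0 ≤ ρ < 1`, the set of
maximizers of `f` on `X` equals the set of maximizers of `f₀` on `X`. -/
theorem gam_preserves_maximizers {d : ℕ} (X : Set (EuclideanSpace ℝ (Fin d)))
    (hXne : X.Nonempty) (hXcomp : IsCompact X)
    (f₀ f : EuclideanSpace ℝ (Fin d) → ℝ)
    (hf₀ : ContinuousOn f₀ X) (hf : ContinuousOn f X)
    (fstar : ℝ) (hfstar : IsGreatest (f₀ '' X) fstar)
    (ρ : ℝ) (hρ0 : 0 ≤ ρ) (hρ1 : ρ < 1)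
    (hgam : ∀ x ∈ X, |f x - f₀ x| ≤ ρ * (fstar - f₀ x)) :
    {x ∈ X | ∀ y ∈ X, f y ≤ f x} = {x ∈ X | ∀ y ∈ X, f₀ y ≤ f₀ x} := by
  obtain ⟨⟨x₀, hx₀X, hx₀⟩, hub⟩ := hfstar
  -- f₀ y ≤ fstar for all y ∈ X
  have hle : ∀ y ∈ X, f₀ y ≤ fstar := fun y hy => hub ⟨y, hy, rfl⟩
  -- f y ≤ fstar - (1-ρ)*(fstar - f₀ y)
  have hfub : ∀ y ∈ X, f y ≤ fstar - (1 - ρ) * (fstar - f₀ y) := by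
    intro y hy
    have h := (abs_le.mp (hgam y hy)).2
    nlinarith [hle y hy]
  -- if f₀ x = fstar then f x = fstar
  have hfeq : ∀ x ∈ X, f₀ x = fstar → f x = fstar := by
    intro x hx hxf
    have h := abs_le.mp (hgam x hx)
    rw [hxf] at h
    have h1 := h.1
    have h2 := h.2
    simp at h1 h2
    linarith
  have hfx₀ : f x₀ = fstar := hfeq x₀ hx₀X hx₀
  ext x
  simp only [Set.mem_setOf_eq]
  constructor
  · rintro ⟨hxX, hmax⟩
    refine ⟨hxX, fun y hy => ?_⟩
    have h1 : fstar ≤ f x := hfx₀ ▸ hmax x₀ hx₀X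
    have h2 := hfub x hxX
    have h3 : f₀ x = fstar := by nlinarith [hle x hxX]
    rw [h3]; exact hle y hy
  · rintro ⟨hxX, hmax⟩
    refine ⟨hxX, fun y hy => ?_⟩
    have h3 : f₀ x = fstar := le_antisymm (hle x hxX) (hx₀ ▸ hmax x₀ hx₀X)
    have := hfub y hy
    have := hfeq x hxX h3
    nlinarith [hle y hy]
end

section
/- Under the weak ρ-gap-adjusted misspecification condition with 0 ≤ ρ < 1, the maximizer sets coincide: argmax f = argmax f₀. -/
/-- Under the weak ρ-gap-adjusted misspecification condition with
`0 ≤ ρ < 1`, the maximizer sets coincide: `argmax f = argmax f₀`. -/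
theorem weak_gam_preserves_maximizers {d : ℕ} (X : Set (EuclideanSpace ℝ (Fin d)))
    (hXne : X.Nonempty) (hXcomp : IsCompact X)
    (f₀ f : EuclideanSpace ℝ (Fin d) → ℝ)
    (hf₀ : ContinuousOn f₀ X) (hf : ContinuousOn f X)
    (fstar fwstar : ℝ) (hfstar : IsGreatest (f₀ '' X) fstar)
    (hfwstar : IsGreatest (f '' X) fwstar)
    (ρ : ℝ) (hρ0 : 0 ≤ ρ) (hρ1 : ρ < 1)
    (hgam : ∀ x ∈ X, |f x - fwstar + fstar - f₀ x| ≤ ρ * (fstar - f₀ x)) :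
    {x ∈ X | ∀ y ∈ X, f y ≤ f x} = {x ∈ X | ∀ y ∈ X, f₀ y ≤ f₀ x} := by
  obtain ⟨⟨z, hzX, hz⟩, hub⟩ := hfwstar
  obtain ⟨⟨w, hwX, hw⟩, hub₀⟩ := hfstar
  have hle : ∀ x ∈ X, f x ≤ fwstar := fun x hx => hub ⟨x, hx, rfl⟩
  have hle₀ : ∀ x ∈ X, f₀ x ≤ fstar := fun x hx => hub₀ ⟨x, hx, rfl⟩
  ext x
  simp only [Set.mem_setOf_eq]
  constructor
  · rintro ⟨hxX, hmax⟩
    refine ⟨hxX, fun y hy => ?_⟩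
    have hfx : f x = fwstar := le_antisymm (hle x hxX) (hz ▸ hmax z hzX)
    have h := hgam x hxX
    have h1 : f x - fwstar + fstar - f₀ x ≤ ρ * (fstar - f₀ x) := le_of_abs_le h
    have h2 : f₀ x = fstar := by nlinarith [hle₀ x hxX]
    exact h2 ▸ hle₀ y hy
  · rintro ⟨hxX, hmax⟩
    refine ⟨hxX, fun y hy => ?_⟩
    have h2 : f₀ x = fstar := le_antisymm (hle₀ x hxX) (hw ▸ hmax w hwX)
    have h := hgam x hxX
    rw [h2] at h
    have h1 : fwstar - f x ≤ |f x - fwstar + fstar - fstar| := by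
      rw [abs_sub_comm (f x - fwstar + fstar)]
      calc fwstar - f x = fstar - (f x - fwstar + fstar) := by ring
        _ ≤ |fstar - (f x - fwstar + fstar)| := le_abs_self _
    have : fwstar - f x ≤ 0 := by nlinarith
    linarith [hle y hy]
end

section
/- (Potential function bound) If ‖x_t‖₂ ≤ C_b for all t < T and λ > 0, then log det(I_d + (1/λ)Σ_{t=0}^{T-1} x_t x_tᵀ) ≤ d·log(1 + T·C_b²/(d·λ)). -/
open Matrix Finset

/-!
`M = 1 + λ⁻¹ ∑ₜ xₜ xₜᵀ` is positive definite, and concavity of `log` on its eigenvalues gives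
AM-GM in the form `log det M ≤ d log (tr M / d)`. Since `tr (x xᵀ) = ‖x‖²`, the trace is
`tr M = d + λ⁻¹ ∑ₜ ‖xₜ‖² ≤ d + T C_b² / λ`.
-/

namespace Matrix

theorem PosDef.log_det_le_card_mul_log_trace_div {n : Type*} [Fintype n] [DecidableEq n]
    {A : Matrix n n ℝ} (hA : A.PosDef) :
    Real.log A.det ≤ Fintype.card n * Real.log (A.trace / Fintype.card n) := by
  cases isEmpty_or_nonempty n
  · simp
  set μ := hA.isHermitian.eigenvalues
  have hcard : (0 : ℝ) < Fintype.card n := by exact_mod_cast Fintype.card_pos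
  have jensen := strictConcaveOn_log_Ioi.concaveOn.le_map_sum (t := univ)
    (w := fun _ => (Fintype.card n : ℝ)⁻¹) (p := μ) (fun _ _ => by positivity)
    (by simp [hcard.ne']) (fun i _ => hA.eigenvalues_pos i)
  rw [← smul_sum, ← smul_sum, smul_eq_mul, smul_eq_mul, inv_mul_eq_div, inv_mul_eq_div,
    div_le_iff₀' hcard] at jensen
  rw [hA.isHermitian.det_eq_prod_eigenvalues, hA.isHermitian.trace_eq_sum_eigenvalues]
  simp only [RCLike.ofReal_real_eq_id, id]
  rwa [Real.log_prod fun i _ => (hA.eigenvalues_pos i).ne']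

theorem trace_vecMulVec_self {ι : Type*} [Fintype ι] (v : EuclideanSpace ℝ ι) :
    trace (vecMulVec v v) = ‖v‖ ^ 2 := by
  rw [trace_vecMulVec, ← real_inner_self_eq_norm_sq, EuclideanSpace.inner_eq_star_dotProduct,
    star_trivial]

end Matrix

theorem potential_function_bound_general {d T : ℕ} (lam Cb : ℝ) (hlam : 0 < lam)
    (x : ℕ → EuclideanSpace ℝ (Fin d))
    (hx : ∀ t < T, ‖x t‖ ≤ Cb) :
    Real.log ((1 + lam⁻¹ • ∑ t ∈ Finset.range T,
        vecMulVec (x t) (x t) : Matrix (Fin d) (Fin d) ℝ).det)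
      ≤ d * Real.log (1 + T * Cb ^ 2 / (d * lam)) := by
  rcases Nat.eq_zero_or_pos d with rfl | hd
  · simp
  have := NeZero.of_pos hd
  set S := ∑ t ∈ range T, vecMulVec (x t) (x t)
  have hS : S.PosSemidef :=
    posSemidef_sum _ fun t _ => by simpa using posSemidef_vecMulVec_self_star (x t).ofLp
  have hM : (1 + lam⁻¹ • S).PosDef := PosDef.one.add_posSemidef (hS.smul (by positivity))
  have htrS : S.trace ≤ T * Cb ^ 2 := by
    rw [trace_sum]
    simp_rw [trace_vecMulVec_self]
    calc ∑ t ∈ range T, ‖x t‖ ^ 2 ≤ ∑ t ∈ range T, Cb ^ 2 :=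
          sum_le_sum fun t ht => pow_le_pow_left₀ (norm_nonneg _) (hx t (mem_range.mp ht)) 2
      _ = T * Cb ^ 2 := by simp
  have hd' : (0 : ℝ) < d := by exact_mod_cast hd
  have htrM : (1 + lam⁻¹ • S).trace / d ≤ 1 + T * Cb ^ 2 / (d * lam) := by
    rw [trace_add, trace_one, trace_smul, Fintype.card_fin, smul_eq_mul, add_div, div_self hd'.ne',
      mul_comm (d : ℝ), ← div_div, inv_mul_eq_div]
    gcongr
  calc _ ≤ d * Real.log ((1 + lam⁻¹ • S).trace / d) := by
        simpa using hM.log_det_le_card_mul_log_trace_div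
    _ ≤ _ := by
        gcongr
        exact div_pos hM.trace_pos hd'

/-- Potential function bound: If `‖x_t‖₂ ≤ C_b` for all `t < T` and
`λ > 0`, then `log det(I_d + (1/λ) Σ_{t<T} x_t x_tᵀ) ≤ d log(1 + T C_b²/(d λ))`. -/
theorem potential_function_bound {d T : ℕ} (hd : 0 < d) (lam Cb : ℝ) (hlam : 0 < lam)
    (x : ℕ → EuclideanSpace ℝ (Fin d))
    (hx : ∀ t < T, ‖x t‖ ≤ Cb) :
    Real.log ((1 + lam⁻¹ • ∑ t ∈ Finset.range T,
        vecMulVec (x t) (x t) : Matrix (Fin d) (Fin d) ℝ).det)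
      ≤ d * Real.log (1 + T * Cb ^ 2 / (d * lam)) :=
  potential_function_bound_general lam Cb hlam x hx
end

section
/- Let Δ_0,...,Δ_{t-1} ∈ ℝ, x_0,...,x_{t-1} ∈ ℝ^d, and Σ_t = λI + Σ_i x_i x_iᵀ with λ > 0. Then ‖Σ_{i} Δ_i x_i‖²_{Σ_t^{-1}} ≤ (Σ_i Δ_i²)·(Σ_i ‖x_i‖²_{Σ_t^{-1}}) ≤ d·Σ_{i=0}^{t-1} Δ_i². -/
/-!
Both inequalities are about the quadratic form of `Σ⁻¹`, which is positive semidefinite. The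
first is Cauchy–Schwarz for `∑ i, Δ i • x i`, and for a positive semidefinite bilinear form it
needs no square roots: `B(Δⱼ xᵢ, Δᵢ xⱼ) + B(Δᵢ xⱼ, Δⱼ xᵢ) ≤ Δⱼ² B(xᵢ, xᵢ) + Δᵢ² B(xⱼ, xⱼ)`,
summed over all pairs `(i, j)`. For the second,
`∑ i, xᵢᵀ Σ⁻¹ xᵢ = tr (Σ⁻¹ (Σ - λ I)) = d - λ tr Σ⁻¹ ≤ d`.
-/

open Matrix Finset

namespace LinearMap.BilinForm

variable {M ι : Type*} [AddCommGroup M] [Module ℝ M]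

lemma apply_add_apply_swap_le (B : LinearMap.BilinForm ℝ M) (hB : ∀ v, 0 ≤ B v v) (u w : M) :
    B u w + B w u ≤ B u u + B w w := by
  have := hB (u - w)
  simp only [map_sub, LinearMap.sub_apply] at this
  linarith

lemma apply_sum_smul_self_le (B : LinearMap.BilinForm ℝ M) (hB : ∀ v, 0 ≤ B v v) (s : Finset ι)
    (c : ι → ℝ) (v : ι → M) :
    B (∑ i ∈ s, c i • v i) (∑ i ∈ s, c i • v i)
      ≤ (∑ i ∈ s, c i ^ 2) * ∑ i ∈ s, B (v i) (v i) := by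
  have expand : B (∑ i ∈ s, c i • v i) (∑ i ∈ s, c i • v i)
      = ∑ i ∈ s, ∑ j ∈ s, B (c i • v j) (c j • v i) := by
    simp only [map_sum, LinearMap.sum_apply, map_smul, LinearMap.smul_apply,
      smul_eq_mul, mul_sum]
    exact sum_congr rfl fun i _ => sum_congr rfl fun j _ => by ring
  have hswap : ∑ i ∈ s, ∑ j ∈ s, B (c i • v j) (c j • v i)
      = ∑ i ∈ s, ∑ j ∈ s, B (c j • v i) (c i • v j) := sum_comm
  have key : 2 * B (∑ i ∈ s, c i • v i) (∑ i ∈ s, c i • v i)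
      ≤ ∑ i ∈ s, ∑ j ∈ s, (c j ^ 2 * B (v i) (v i) + c i ^ 2 * B (v j) (v j)) := by
    rw [two_mul, expand]
    nth_rewrite 2 [hswap]
    rw [← sum_add_distrib]
    refine sum_le_sum fun i _ => ?_
    rw [← sum_add_distrib]
    refine sum_le_sum fun j _ => ?_
    refine (B.apply_add_apply_swap_le hB _ _).trans_eq ?_
    simp only [map_smul, LinearMap.smul_apply, smul_eq_mul]
    ring
  have hrhs : ∑ i ∈ s, ∑ j ∈ s, (c j ^ 2 * B (v i) (v i) + c i ^ 2 * B (v j) (v j))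
      = 2 * ((∑ i ∈ s, c i ^ 2) * ∑ i ∈ s, B (v i) (v i)) := by
    simp only [sum_add_distrib, ← sum_mul, ← mul_sum]
    ring
  linarith

end LinearMap.BilinForm

namespace Matrix

variable {n ι : Type*} [Fintype n]

lemma sum_dotProduct_mulVec_eq_trace {R : Type*} [CommSemiring R] (A : Matrix n n R)
    (s : Finset ι) (x : ι → n → R) :
    ∑ i ∈ s, x i ⬝ᵥ (A *ᵥ x i) = trace (A * ∑ i ∈ s, vecMulVec (x i) (x i)) := by
  rw [mul_sum, trace_sum]
  exact sum_congr rfl fun i _ => by rw [mul_vecMulVec, trace_vecMulVec, dotProduct_comm]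

variable [DecidableEq n]

lemma PosSemidef.sum_smul_dotProduct_mulVec_le {A : Matrix n n ℝ} (hA : A.PosSemidef)
    (s : Finset ι) (c : ι → ℝ) (v : ι → n → ℝ) :
    (∑ i ∈ s, c i • v i) ⬝ᵥ (A *ᵥ ∑ i ∈ s, c i • v i)
      ≤ (∑ i ∈ s, c i ^ 2) * ∑ i ∈ s, v i ⬝ᵥ (A *ᵥ v i) := by
  have hnonneg : ∀ w, 0 ≤ toBilin' A w w := fun w => by
    simpa [toBilin'_apply'] using hA.dotProduct_mulVec_nonneg w
  simpa only [toBilin'_apply'] using (toBilin' A).apply_sum_smul_self_le hnonneg s c v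

lemma posDef_smul_one_add_sum_vecMulVec {lam : ℝ} (hlam : 0 < lam) (s : Finset ι)
    (x : ι → n → ℝ) : (lam • (1 : Matrix n n ℝ) + ∑ i ∈ s, vecMulVec (x i) (x i)).PosDef :=
  (PosDef.one.smul hlam).add_posSemidef <| posSemidef_sum s fun i _ => by
    simpa using posSemidef_vecMulVec_self_star (x i)

lemma sum_dotProduct_inv_mulVec_le_card {lam : ℝ} (hlam : 0 < lam) (s : Finset ι)
    (x : ι → n → ℝ) :
    ∑ i ∈ s, x i ⬝ᵥ ((lam • 1 + ∑ j ∈ s, vecMulVec (x j) (x j))⁻¹ *ᵥ x i)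
      ≤ Fintype.card n := by
  set S := lam • (1 : Matrix n n ℝ) + ∑ j ∈ s, vecMulVec (x j) (x j)
  have hS : S.PosDef := posDef_smul_one_add_sum_vecMulVec hlam s x
  have hG : ∑ j ∈ s, vecMulVec (x j) (x j) = S - lam • 1 := by
    simp only [S, add_sub_cancel_left]
  have htr : 0 ≤ lam * trace S⁻¹ := mul_nonneg hlam.le hS.inv.posSemidef.trace_nonneg
  rw [sum_dotProduct_mulVec_eq_trace, hG, Matrix.mul_sub,
    nonsing_inv_mul S ((isUnit_iff_isUnit_det S).mp hS.isUnit), Matrix.mul_smul, mul_one,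
    trace_sub, trace_one, trace_smul, smul_eq_mul]
  linarith

end Matrix

/-- With `Σ_t = λ I + Σ_{i<t} x_i x_iᵀ`, `λ > 0`,
`‖Σ_i Δ_i x_i‖²_{Σ_t⁻¹} ≤ (Σ_i Δ_i²)(Σ_i ‖x_i‖²_{Σ_t⁻¹}) ≤ d Σ_i Δ_i²`. -/
theorem misspecification_term_bound {d t : ℕ} (lam : ℝ) (hlam : 0 < lam)
    (x : ℕ → Fin d → ℝ) (Δ : ℕ → ℝ)
    (S : Matrix (Fin d) (Fin d) ℝ)
    (hS : S = lam • (1 : Matrix (Fin d) (Fin d) ℝ)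
      + ∑ i ∈ Finset.range t, vecMulVec (x i) (x i)) :
    (∑ i ∈ Finset.range t, Δ i • x i) ⬝ᵥ (S⁻¹ *ᵥ ∑ i ∈ Finset.range t, Δ i • x i)
        ≤ (∑ i ∈ Finset.range t, (Δ i) ^ 2)
          * (∑ i ∈ Finset.range t, x i ⬝ᵥ (S⁻¹ *ᵥ x i)) ∧
      (∑ i ∈ Finset.range t, (Δ i) ^ 2)
          * (∑ i ∈ Finset.range t, x i ⬝ᵥ (S⁻¹ *ᵥ x i))
        ≤ (d : ℝ) * ∑ i ∈ Finset.range t, (Δ i) ^ 2 := by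
  subst hS
  have hS := posDef_smul_one_add_sum_vecMulVec hlam (range t) x
  refine ⟨hS.inv.posSemidef.sum_smul_dotProduct_mulVec_le (range t) Δ x, ?_⟩
  rw [mul_comm (d : ℝ)]
  refine mul_le_mul_of_nonneg_left ?_ (sum_nonneg fun i _ => sq_nonneg (Δ i))
  simpa using sum_dotProduct_inv_mulVec_le_card hlam (range t) x
end
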